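/- In the presented semigroup S_pres the following derived relations hold: (1) E_{i,j} Z^r_{h,k} = E_{h,k} Z^r_{i,j}; (2) Z^r_{i,j} Z^t_{h,k} Z^r_{p,q} = Z^t_{i,j} Z^r_{(t∘r)(h),(t∘r)(k)} Z^t_{(t∘r)(p),(t∘r)(q)} whenever |r−t| = 1; (3) Z^r_{i,j} Z^t_{h,k} = Z^t_{i,j} Z^r_{(t∘r)(h),(t∘r)(k)} whenever |r−t| > 1; here (t∘r)(x) denotes s_t(s_r(x)). -/

import Mathlib

/-- The transposition `s_r = (r, r+1)` of `{1,…,n}`, for `r ∈ {1,…,n−1}`. -/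
def swapAdj {n : ℕ} (r : Fin (n - 1)) : Equiv.Perm (Fin n) :=
  Equiv.swap ⟨r.1, by omega⟩ ⟨r.1 + 1, by omega⟩

/-- Generators `E_{i,j}` (`1 ≤ i < j ≤ n`) and `Z^r_{i,j}` (`r ∈ {1,…,n−1}`,
`1 ≤ i < j ≤ n`) of the presented semigroup `S_pres`. -/
inductive SPGen (n : ℕ) : Type
  | E : (i j : Fin n) → i < j → SPGen n
  | Z : (r : Fin (n - 1)) → (i j : Fin n) → i < j → SPGen n

/-- The generator `E_{i,j}` for an unordered pair `{i,j}` with `i ≠ j`, written with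
the smaller entry first. -/
def Ee {n : ℕ} (i j : Fin n) (h : i ≠ j) : FreeSemigroup (SPGen n) :=
  if hlt : i < j then FreeSemigroup.of (SPGen.E i j hlt)
  else FreeSemigroup.of (SPGen.E j i (h.lt_or_gt.resolve_left hlt))

/-- The generator `Z^r_{i,j}` for an unordered pair `{i,j}` with `i ≠ j`, written with
the smaller entry first. -/
def Zz {n : ℕ} (r : Fin (n - 1)) (i j : Fin n) (h : i ≠ j) : FreeSemigroup (SPGen n) :=
  if hlt : i < j then FreeSemigroup.of (SPGen.Z r i j hlt)
  else FreeSemigroup.of (SPGen.Z r j i (h.lt_or_gt.resolve_left hlt))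

/-- The defining relations of the presented semigroup `S_pres`. -/
inductive SPRel (n : ℕ) : FreeSemigroup (SPGen n) → FreeSemigroup (SPGen n) → Prop
  | esq (i j : Fin n) (h : i ≠ j) : SPRel n (Ee i j h * Ee i j h) (Ee i j h)
  | ecomm (i j : Fin n) (h : i ≠ j) (p q : Fin n) (h' : p ≠ q) :
      SPRel n (Ee i j h * Ee p q h') (Ee p q h' * Ee i j h)
  | etrans1 (i j k : Fin n) (hij : i < j) (hjk : j < k) :
      SPRel n (Ee i j hij.ne * Ee i k (hij.trans hjk).ne) (Ee i j hij.ne * Ee j k hjk.ne)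
  | etrans2 (i j k : Fin n) (hij : i < j) (hjk : j < k) :
      SPRel n (Ee i j hij.ne * Ee j k hjk.ne) (Ee i k (hij.trans hjk).ne * Ee j k hjk.ne)
  | zbraid (r t : Fin (n - 1)) (hrt : Nat.dist r.1 t.1 = 1) (i j : Fin n) (h : i ≠ j) :
      SPRel n
        (Zz r i j h * Zz t (swapAdj r i) (swapAdj r j) ((swapAdj r).injective.ne h)
          * Zz r (swapAdj t (swapAdj r i)) (swapAdj t (swapAdj r j))
              ((swapAdj t).injective.ne ((swapAdj r).injective.ne h)))
        (Zz t i j h * Zz r (swapAdj t i) (swapAdj t j) ((swapAdj t).injective.ne h)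
          * Zz t (swapAdj r (swapAdj t i)) (swapAdj r (swapAdj t j))
              ((swapAdj r).injective.ne ((swapAdj t).injective.ne h)))
  | zcomm (r t : Fin (n - 1)) (hrt : 1 < Nat.dist r.1 t.1) (i j : Fin n) (h : i ≠ j) :
      SPRel n (Zz r i j h * Zz t (swapAdj r i) (swapAdj r j) ((swapAdj r).injective.ne h))
              (Zz t i j h * Zz r (swapAdj t i) (swapAdj t j) ((swapAdj t).injective.ne h))
  | zz (r : Fin (n - 1)) (i j : Fin n) (h : i ≠ j) (p q : Fin n) (h' : p ≠ q) :
      SPRel n (Zz r i j h * Zz r p q h')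
              (Ee i j h * Ee (swapAdj r p) (swapAdj r q) ((swapAdj r).injective.ne h'))
  | ez (r : Fin (n - 1)) (i j : Fin n) (h : i ≠ j) :
      SPRel n (Ee i j h * Zz r i j h) (Zz r i j h)
  | ze (r : Fin (n - 1)) (i j : Fin n) (h : i ≠ j) (p q : Fin n) (h' : p ≠ q) :
      SPRel n (Zz r i j h * Ee p q h')
              (Ee (swapAdj r p) (swapAdj r q) ((swapAdj r).injective.ne h') * Zz r i j h)

/-- The presented semigroup `S_pres`: the quotient of the free semigroup on the
generators by the congruence generated by the relations. -/
def SPres (n : ℕ) : Type := (conGen (SPRel n)).Quotient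

instance (n : ℕ) : Semigroup (SPres n) :=
  inferInstanceAs (Semigroup (conGen (SPRel n)).Quotient)

/-- The canonical quotient map onto `S_pres`. -/
def spmk {n : ℕ} (x : FreeSemigroup (SPGen n)) : SPres n := Con.toQuotient x

namespace SPaux
variable {n : ℕ}

lemma mk_mul (x y : FreeSemigroup (SPGen n)) : spmk (x * y) = spmk x * spmk y := rfl

lemma of_rel {a b : FreeSemigroup (SPGen n)} (h : SPRel n a b) : spmk a = spmk b :=
  (Con.eq _).mpr (ConGen.Rel.of _ _ h)

lemma sw_sw (r : Fin (n - 1)) (x : Fin n) : swapAdj r (swapAdj r x) = x :=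
  Equiv.swap_apply_self _ _ _

lemma sw_ne (r : Fin (n - 1)) {i j : Fin n} (h : i ≠ j) : swapAdj r i ≠ swapAdj r j :=
  (swapAdj r).injective.ne h

lemma sw_val (r : Fin (n - 1)) (x : Fin n) :
    (swapAdj r x).1 = if x.1 = r.1 then r.1 + 1 else if x.1 = r.1 + 1 then r.1 else x.1 := by
  rw [swapAdj, Equiv.swap_apply_def]
  split_ifs with h1 h2 h3 h4 h5 <;> simp_all [Fin.ext_iff]

set_option maxHeartbeats 1000000 in
lemma braid_pt (r t : Fin (n - 1)) (hrt : Nat.dist r.1 t.1 = 1) (x : Fin n) :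
    swapAdj t (swapAdj r (swapAdj t (swapAdj r x))) = swapAdj r (swapAdj t x) := by
  have hr := r.2; have ht := t.2; have hx := x.2
  simp only [Nat.dist] at hrt
  apply Fin.ext
  simp only [sw_val]
  split_ifs <;> omega

lemma Ee_congr {i j i' j' : Fin n} (hi : i = i') (hj : j = j') {h : i ≠ j} {h' : i' ≠ j'} :
    Ee i j h = Ee i' j' h' := by subst hi; subst hj; rfl

lemma Zz_congr (r : Fin (n - 1)) {i j i' j' : Fin n} (hi : i = i') (hj : j = j')
    {h : i ≠ j} {h' : i' ≠ j'} : Zz r i j h = Zz r i' j' h' := by subst hi; subst hj; rfl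

/-! Quotient-level versions of the defining relations, with arbitrary proof arguments. -/

lemma q_esq (i j : Fin n) (h : i ≠ j) :
    spmk (Ee i j h) * spmk (Ee i j h) = spmk (Ee i j h) := by
  rw [← mk_mul]; exact of_rel (SPRel.esq i j h)

lemma q_zz (r : Fin (n - 1)) (i j : Fin n) (h : i ≠ j) (p q : Fin n) (h' : p ≠ q)
    (hA : swapAdj r p ≠ swapAdj r q) :
    spmk (Zz r i j h) * spmk (Zz r p q h')
      = spmk (Ee i j h) * spmk (Ee (swapAdj r p) (swapAdj r q) hA) := by
  rw [← mk_mul, ← mk_mul]; exact of_rel (SPRel.zz r i j h p q h')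

lemma q_ez (r : Fin (n - 1)) (i j : Fin n) (h : i ≠ j) :
    spmk (Ee i j h) * spmk (Zz r i j h) = spmk (Zz r i j h) := by
  rw [← mk_mul]; exact of_rel (SPRel.ez r i j h)

lemma q_ze (r : Fin (n - 1)) (i j : Fin n) (h : i ≠ j) (p q : Fin n) (h' : p ≠ q)
    (hA : swapAdj r p ≠ swapAdj r q) :
    spmk (Zz r i j h) * spmk (Ee p q h')
      = spmk (Ee (swapAdj r p) (swapAdj r q) hA) * spmk (Zz r i j h) := by
  rw [← mk_mul, ← mk_mul]; exact of_rel (SPRel.ze r i j h p q h')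

lemma q_zcomm (r t : Fin (n - 1)) (hrt : 1 < Nat.dist r.1 t.1) (i j : Fin n) (h : i ≠ j)
    (hA : swapAdj r i ≠ swapAdj r j) (hB : swapAdj t i ≠ swapAdj t j) :
    spmk (Zz r i j h) * spmk (Zz t (swapAdj r i) (swapAdj r j) hA)
      = spmk (Zz t i j h) * spmk (Zz r (swapAdj t i) (swapAdj t j) hB) := by
  rw [← mk_mul, ← mk_mul]; exact of_rel (SPRel.zcomm r t hrt i j h)

lemma q_zbraid (r t : Fin (n - 1)) (hrt : Nat.dist r.1 t.1 = 1) (i j : Fin n) (h : i ≠ j)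
    (hA : swapAdj r i ≠ swapAdj r j)
    (hA' : swapAdj t (swapAdj r i) ≠ swapAdj t (swapAdj r j))
    (hB : swapAdj t i ≠ swapAdj t j)
    (hB' : swapAdj r (swapAdj t i) ≠ swapAdj r (swapAdj t j)) :
    spmk (Zz r i j h) * spmk (Zz t (swapAdj r i) (swapAdj r j) hA)
        * spmk (Zz r (swapAdj t (swapAdj r i)) (swapAdj t (swapAdj r j)) hA')
      = spmk (Zz t i j h) * spmk (Zz r (swapAdj t i) (swapAdj t j) hB)
        * spmk (Zz t (swapAdj r (swapAdj t i)) (swapAdj r (swapAdj t j)) hB') := by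
  rw [← mk_mul, ← mk_mul, ← mk_mul, ← mk_mul]
  exact of_rel (SPRel.zbraid r t hrt i j h)

/-! Derived relations. -/

/-- `Z^r_{ij} · E_{s_r(i), s_r(j)} = Z^r_{ij}`. -/
lemma zE_self (r : Fin (n - 1)) (i j : Fin n) (h : i ≠ j)
    (h₂ : swapAdj r i ≠ swapAdj r j) :
    spmk (Zz r i j h) * spmk (Ee (swapAdj r i) (swapAdj r j) h₂) = spmk (Zz r i j h) := by
  rw [q_ze r i j h _ _ h₂ (sw_ne r h₂),
    Ee_congr (sw_sw r i) (sw_sw r j) (h' := h), q_ez]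

/-- `E_{ij} = Z^r_{ij} · Z^r_{s_r(i), s_r(j)}`. -/
lemma e_eq_zz (r : Fin (n - 1)) (i j : Fin n) (h : i ≠ j)
    (h₂ : swapAdj r i ≠ swapAdj r j) :
    spmk (Ee i j h) = spmk (Zz r i j h) * spmk (Zz r (swapAdj r i) (swapAdj r j) h₂) := by
  rw [q_zz r i j h _ _ h₂ (sw_ne r h₂),
    Ee_congr (sw_sw r i) (sw_sw r j) (h' := h), q_esq]

/-- Derived relation (1): `E_{ij} Z^r_{pq} = E_{pq} Z^r_{ij}`. -/
lemma d1 (i j : Fin n) (h : i ≠ j) (p q : Fin n) (h' : p ≠ q) (r : Fin (n - 1)) :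
    spmk (Ee i j h) * spmk (Zz r p q h') = spmk (Ee p q h') * spmk (Zz r i j h) := by
  rw [e_eq_zz r i j h (sw_ne r h), mul_assoc,
    q_zz r (swapAdj r i) (swapAdj r j) (sw_ne r h) p q h' (sw_ne r h'),
    ← mul_assoc, zE_self r i j h (sw_ne r h),
    q_ze r i j h _ _ (sw_ne r h') (sw_ne r (sw_ne r h')),
    Ee_congr (sw_sw r p) (sw_sw r q) (h' := h')]

/-- Pulling an `E` factor out of a product `Z^r Z^t`. -/
lemma d_pull (r t : Fin (n - 1)) (i j : Fin n) (h : i ≠ j) (p q : Fin n) (h' : p ≠ q)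
    (hA : swapAdj r p ≠ swapAdj r q) (hB : swapAdj r i ≠ swapAdj r j) :
    spmk (Zz r i j h) * spmk (Zz t p q h')
      = spmk (Ee (swapAdj r p) (swapAdj r q) hA)
          * (spmk (Zz r i j h) * spmk (Zz t (swapAdj r i) (swapAdj r j) hB)) := by
  conv_lhs => rw [← zE_self r i j h hB]
  rw [mul_assoc, d1 (swapAdj r i) (swapAdj r j) hB p q h' t, ← mul_assoc,
    q_ze r i j h p q h' hA, mul_assoc]


/-- Right-associated form of the braid relation. -/
lemma q_zbraid' (r t : Fin (n - 1)) (hrt : Nat.dist r.1 t.1 = 1) (i j : Fin n) (h : i ≠ j)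
    (hA : swapAdj r i ≠ swapAdj r j)
    (hA' : swapAdj t (swapAdj r i) ≠ swapAdj t (swapAdj r j))
    (hB : swapAdj t i ≠ swapAdj t j)
    (hB' : swapAdj r (swapAdj t i) ≠ swapAdj r (swapAdj t j)) :
    spmk (Zz r i j h) * (spmk (Zz t (swapAdj r i) (swapAdj r j) hA)
        * spmk (Zz r (swapAdj t (swapAdj r i)) (swapAdj t (swapAdj r j)) hA'))
      = spmk (Zz t i j h) * (spmk (Zz r (swapAdj t i) (swapAdj t j) hB)
        * spmk (Zz t (swapAdj r (swapAdj t i)) (swapAdj r (swapAdj t j)) hB')) := by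
  rw [← mul_assoc, ← mul_assoc]; exact q_zbraid r t hrt i j h hA hA' hB hB'

/-- Pulling an `E` factor out of a triple product. -/
lemma d_triple (r t : Fin (n - 1)) (i j : Fin n) (h : i ≠ j) (u v : Fin n) (h'' : u ≠ v)
    (hB : swapAdj r i ≠ swapAdj r j)
    (hC : swapAdj t (swapAdj r i) ≠ swapAdj t (swapAdj r j))
    (hE : swapAdj r (swapAdj t u) ≠ swapAdj r (swapAdj t v)) :
    spmk (Zz r i j h) * (spmk (Zz t (swapAdj r i) (swapAdj r j) hB) * spmk (Zz r u v h''))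
      = spmk (Ee (swapAdj r (swapAdj t u)) (swapAdj r (swapAdj t v)) hE)
          * (spmk (Zz r i j h) * (spmk (Zz t (swapAdj r i) (swapAdj r j) hB)
              * spmk (Zz r (swapAdj t (swapAdj r i)) (swapAdj t (swapAdj r j)) hC))) := by
  rw [d_pull t r (swapAdj r i) (swapAdj r j) hB u v h'' (sw_ne t h'') hC,
    ← mul_assoc, q_ze r i j h (swapAdj t u) (swapAdj t v) (sw_ne t h'') hE, mul_assoc]

/-- Derived relation (3). -/
lemma d3 (r t : Fin (n - 1)) (hrt : 1 < Nat.dist r.1 t.1) (i j : Fin n) (h : i ≠ j)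
    (p q : Fin n) (h' : p ≠ q)
    (hD : swapAdj t (swapAdj r p) ≠ swapAdj t (swapAdj r q)) :
    spmk (Zz r i j h) * spmk (Zz t p q h')
      = spmk (Zz t i j h)
          * spmk (Zz r (swapAdj t (swapAdj r p)) (swapAdj t (swapAdj r q)) hD) := by
  rw [d_pull r t i j h p q h' (sw_ne r h') (sw_ne r h),
    q_zcomm r t hrt i j h (sw_ne r h) (sw_ne t h),
    d_pull t r i j h (swapAdj t (swapAdj r p)) (swapAdj t (swapAdj r q)) hD
      (sw_ne t hD) (sw_ne t h),
    Ee_congr (sw_sw t (swapAdj r p)) (sw_sw t (swapAdj r q)) (h' := sw_ne r h')]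

/-- Derived relation (2). -/
lemma d2 (r t : Fin (n - 1)) (hrt : Nat.dist r.1 t.1 = 1) (i j : Fin n) (h : i ≠ j)
    (p q : Fin n) (h' : p ≠ q) (u v : Fin n) (h'' : u ≠ v)
    (hD : swapAdj t (swapAdj r p) ≠ swapAdj t (swapAdj r q))
    (hF : swapAdj t (swapAdj r u) ≠ swapAdj t (swapAdj r v)) :
    spmk (Zz r i j h) * spmk (Zz t p q h') * spmk (Zz r u v h'')
      = spmk (Zz t i j h)
          * spmk (Zz r (swapAdj t (swapAdj r p)) (swapAdj t (swapAdj r q)) hD)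
          * spmk (Zz t (swapAdj t (swapAdj r u)) (swapAdj t (swapAdj r v)) hF) := by
  rw [d_pull r t i j h p q h' (sw_ne r h') (sw_ne r h),
    d_pull t r i j h (swapAdj t (swapAdj r p)) (swapAdj t (swapAdj r q)) hD
      (sw_ne t hD) (sw_ne t h),
    Ee_congr (sw_sw t (swapAdj r p)) (sw_sw t (swapAdj r q)) (h' := sw_ne r h')]
  simp only [mul_assoc]
  rw [d_triple r t i j h u v h'' (sw_ne r h) (sw_ne t (sw_ne r h)) (sw_ne r (sw_ne t h'')),
    d_triple t r i j h (swapAdj t (swapAdj r u)) (swapAdj t (swapAdj r v)) hF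
      (sw_ne t h) (sw_ne r (sw_ne t h)) (sw_ne t (sw_ne r hF)),
    Ee_congr (braid_pt r t hrt u) (braid_pt r t hrt v) (h' := sw_ne r (sw_ne t h'')),
    q_zbraid' r t hrt i j h (sw_ne r h) (sw_ne t (sw_ne r h)) (sw_ne t h)
      (sw_ne r (sw_ne t h))]

end SPaux

/-- derived relations in the presented semigroup `S_pres`:
(1) `E_{i,j} Z^r_{h,k} = E_{h,k} Z^r_{i,j}`;
(2) `Z^r_{i,j} Z^t_{h,k} Z^r_{p,q}
      = Z^t_{i,j} Z^r_{(t∘r)(h),(t∘r)(k)} Z^t_{(t∘r)(p),(t∘r)(q)}` for `|r−t| = 1`;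
(3) `Z^r_{i,j} Z^t_{h,k} = Z^t_{i,j} Z^r_{(t∘r)(h),(t∘r)(k)}` for `|r−t| > 1`;
where `(t∘r)(x) = s_t(s_r(x))`. -/
theorem sPres_derived_relations (n : ℕ) :
    (∀ (i j : Fin n) (h : i ≠ j) (p q : Fin n) (h' : p ≠ q) (r : Fin (n - 1)),
      spmk (Ee i j h * Zz r p q h') = spmk (Ee p q h' * Zz r i j h)) ∧
    (∀ (r t : Fin (n - 1)), Nat.dist r.1 t.1 = 1 →
      ∀ (i j : Fin n) (h : i ≠ j) (p q : Fin n) (h' : p ≠ q) (u v : Fin n) (h'' : u ≠ v),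
      spmk (Zz r i j h * Zz t p q h' * Zz r u v h'')
        = spmk (Zz t i j h
            * Zz r (swapAdj t (swapAdj r p)) (swapAdj t (swapAdj r q))
                ((swapAdj t).injective.ne ((swapAdj r).injective.ne h'))
            * Zz t (swapAdj t (swapAdj r u)) (swapAdj t (swapAdj r v))
                ((swapAdj t).injective.ne ((swapAdj r).injective.ne h'')))) ∧
    (∀ (r t : Fin (n - 1)), 1 < Nat.dist r.1 t.1 →
      ∀ (i j : Fin n) (h : i ≠ j) (p q : Fin n) (h' : p ≠ q),
      spmk (Zz r i j h * Zz t p q h')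
        = spmk (Zz t i j h
            * Zz r (swapAdj t (swapAdj r p)) (swapAdj t (swapAdj r q))
                ((swapAdj t).injective.ne ((swapAdj r).injective.ne h')))) := by
  refine ⟨?_, ?_, ?_⟩
  · intro i j h p q h' r
    simpa only [SPaux.mk_mul] using SPaux.d1 i j h p q h' r
  · intro r t hrt i j h p q h' u v h''
    simpa only [SPaux.mk_mul] using
      SPaux.d2 r t hrt i j h p q h' u v h''
        ((swapAdj t).injective.ne ((swapAdj r).injective.ne h'))
        ((swapAdj t).injective.ne ((swapAdj r).injective.ne h''))
  · intro r t hrt i j h p q h'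
    simpa only [SPaux.mk_mul] using
      SPaux.d3 r t hrt i j h p q h'
        ((swapAdj t).injective.ne ((swapAdj r).injective.ne h'))
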